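/- arXiv:2202.00536 — 2 statements merged into one kernel-verified Lean document; each statement's English description precedes it below -/
import Mathlib

section
/- Let G and H be groups with finite generating sets S₀ and T₀, and let q : G → H be a group homomorphism which is also an (L₀,C₀)-quasi-isometry from (G,d_{S₀}) to (H,d_{T₀}). If T ⊆ H is a generating set of H containing T₀, then there exists a generating set S ⊆ G of G containing S₀ such that q is a quasi-isometry from (G,d_S) to (H,d_T). -/
/-- Word metric on a group `G` associated to a (generating) set `S`:
`wordDist S a b` is the least `n` such that `a⁻¹ * b` is a product of `n`
elements of `S ∪ S⁻¹`. -/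
noncomputable def wordDist {G : Type*} [Group G] (S : Set G) (a b : G) : ℕ :=
  sInf {n : ℕ | ∃ l : List G, (∀ x ∈ l, x ∈ S ∨ x⁻¹ ∈ S) ∧ l.length = n ∧ l.prod = a⁻¹ * b}

/-- `q` is an `(L,C)`-quasi-isometric embedding with respect to the
distance functions `dX` and `dY`. -/
def IsQIEmb {X Y : Type*} (L C : ℝ) (dX : X → X → ℝ) (dY : Y → Y → ℝ) (q : X → Y) : Prop :=
  ∀ a b, dX a b / L - C ≤ dY (q a) (q b) ∧ dY (q a) (q b) ≤ L * dX a b + C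

/-- `q` is an `(L,C)`-quasi-isometry: an `(L,C)`-quasi-isometric embedding whose image is
`C`-dense. -/
def IsQI {X Y : Type*} (L C : ℝ) (dX : X → X → ℝ) (dY : Y → Y → ℝ) (q : X → Y) : Prop :=
  IsQIEmb L C dX dY q ∧ ∀ y, ∃ x, dY y (q x) ≤ C

/-!
Take `S = S₀ ∪ B`, where `B` is the set of `g` with `|q g|_T ≤ 2C₀ + 1`. Every letter of `S` is
mapped to an element of `T`-length at most `L₀ + 2C₀`, so `q` is Lipschitz from `d_S` to `d_T`.
Conversely, follow a `T`-geodesic from `q a` to `q b`; the image of `q` is `C₀`-dense for `d_T`,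
so next to each of its vertices lies a point `q gᵢ`, and consecutive `gᵢ` differ by an element
of `B`. Hence `d_S(a, b) ≤ d_T(q a, q b) + 1`.
-/

section WordMetric

variable {G : Type*} [Group G] {S T : Set G}

theorem wordDist_le_length {a b : G} {l : List G} (hl : ∀ x ∈ l, x ∈ S ∨ x⁻¹ ∈ S)
    (hprod : l.prod = a⁻¹ * b) : wordDist S a b ≤ l.length :=
  Nat.sInf_le ⟨l, hl, rfl, hprod⟩

theorem exists_list_length_eq_wordDist (hS : Subgroup.closure S = ⊤) (a b : G) :
    ∃ l : List G, (∀ x ∈ l, x ∈ S ∨ x⁻¹ ∈ S) ∧ l.length = wordDist S a b ∧ l.prod = a⁻¹ * b := by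
  have hmem : a⁻¹ * b ∈ Submonoid.closure (S ∪ S⁻¹) := by
    rw [← Subgroup.closure_toSubmonoid, hS]
    exact Subgroup.mem_top _
  obtain ⟨l, hl, hprod⟩ := Submonoid.exists_list_of_mem_closure hmem
  exact Nat.sInf_mem (s := {n : ℕ | ∃ l : List G, (∀ x ∈ l, x ∈ S ∨ x⁻¹ ∈ S) ∧ l.length = n ∧
    l.prod = a⁻¹ * b}) ⟨l.length, l, hl, rfl, hprod⟩

theorem wordDist_mul_left (c a b : G) : wordDist S (c * a) (c * b) = wordDist S a b := by
  simp only [wordDist, mul_inv_rev, mul_assoc, inv_mul_cancel_left]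

theorem wordDist_eq_wordDist_one (a b : G) : wordDist S a b = wordDist S 1 (a⁻¹ * b) := by
  rw [← wordDist_mul_left a⁻¹, inv_mul_cancel]

theorem wordDist_self (a : G) : wordDist S a a = 0 :=
  Nat.le_zero.mp (wordDist_le_length (l := []) (by simp) (by simp))

theorem wordDist_le_one_of_mem {a b : G} (h : a⁻¹ * b ∈ S) : wordDist S a b ≤ 1 :=
  wordDist_le_length (l := [a⁻¹ * b]) (by simp [h]) (by simp)

theorem wordDist_comm (a b : G) : wordDist S a b = wordDist S b a := by
  suffices reverse : ∀ (a b : G) (n : ℕ),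
      (∃ l : List G, (∀ x ∈ l, x ∈ S ∨ x⁻¹ ∈ S) ∧ l.length = n ∧ l.prod = a⁻¹ * b) →
      ∃ l : List G, (∀ x ∈ l, x ∈ S ∨ x⁻¹ ∈ S) ∧ l.length = n ∧ l.prod = b⁻¹ * a by
    unfold wordDist
    congr 1
    ext n
    exact ⟨reverse a b n, reverse b a n⟩
  rintro a b n ⟨l, hl, rfl, hprod⟩
  refine ⟨(l.map (·⁻¹)).reverse, ?_, by simp, ?_⟩
  · simp only [List.mem_reverse, List.mem_map]
    rintro _ ⟨x, hx, rfl⟩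
    simpa [or_comm] using hl x hx
  · rw [← List.prod_inv_reverse, hprod, mul_inv_rev, inv_inv]

theorem wordDist_one_inv (a : G) : wordDist S 1 a⁻¹ = wordDist S 1 a := by
  rw [← wordDist_mul_left a, mul_one, mul_inv_cancel, wordDist_comm]

theorem wordDist_triangle (hS : Subgroup.closure S = ⊤) (a b c : G) :
    wordDist S a c ≤ wordDist S a b + wordDist S b c := by
  obtain ⟨l₁, hl₁, hlen₁, hprod₁⟩ := exists_list_length_eq_wordDist hS a b
  obtain ⟨l₂, hl₂, hlen₂, hprod₂⟩ := exists_list_length_eq_wordDist hS b c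
  rw [← hlen₁, ← hlen₂, ← List.length_append]
  refine wordDist_le_length (fun x hx => ?_) (by rw [List.prod_append, hprod₁, hprod₂]; group)
  rcases List.mem_append.mp hx with hx | hx
  exacts [hl₁ x hx, hl₂ x hx]

theorem wordDist_anti (hST : S ⊆ T) (hS : Subgroup.closure S = ⊤) (a b : G) :
    wordDist T a b ≤ wordDist S a b := by
  obtain ⟨l, hl, hlen, hprod⟩ := exists_list_length_eq_wordDist hS a b
  exact hlen ▸ wordDist_le_length (fun x hx => (hl x hx).imp (@hST x) (@hST x⁻¹)) hprod

theorem exists_wordDist_le_one_and_le (hS : Subgroup.closure S = ⊤) {a b : G} {n : ℕ}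
    (h : wordDist S a b ≤ n + 1) : ∃ c, wordDist S a c ≤ 1 ∧ wordDist S c b ≤ n := by
  obtain ⟨l, hl, hlen, hprod⟩ := exists_list_length_eq_wordDist hS a b
  cases l with
  | nil => exact ⟨a, by simp [wordDist_self], by simp at hlen; omega⟩
  | cons t l =>
    refine ⟨a * t, wordDist_le_length (l := [t]) (by simpa using hl t (by simp)) (by simp), ?_⟩
    have hrest : wordDist S (a * t) b ≤ l.length := by
      refine wordDist_le_length (fun x hx => hl x (by simp [hx])) ?_
      rw [List.prod_cons] at hprod
      rw [mul_inv_rev, mul_assoc, ← hprod, inv_mul_cancel_left]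
    simp only [List.length_cons] at hlen
    omega

end WordMetric

section Homomorphism

variable {G H : Type*} [Group G] [Group H] {S : Set G} {T : Set H} (φ : G →* H)

theorem wordDist_map_eq (a b : G) : wordDist T (φ a) (φ b) = wordDist T 1 (φ (a⁻¹ * b)) := by
  rw [wordDist_eq_wordDist_one, map_mul, map_inv]

theorem wordDist_one_map_list_prod_le (hT : Subgroup.closure T = ⊤) {K : ℝ}
    (hK : ∀ s ∈ S, (wordDist T 1 (φ s) : ℝ) ≤ K) {l : List G}
    (hl : ∀ x ∈ l, x ∈ S ∨ x⁻¹ ∈ S) : (wordDist T 1 (φ l.prod) : ℝ) ≤ K * l.length := by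
  induction l with
  | nil => simp [wordDist_self]
  | cons s l ih =>
    have hs : (wordDist T 1 (φ s) : ℝ) ≤ K := by
      rcases hl s (by simp) with h | h
      · exact hK s h
      · simpa [wordDist_one_inv] using hK _ h
    have hrest := ih fun x hx => hl x (by simp [hx])
    have htri : (wordDist T 1 (φ (s :: l).prod) : ℝ) ≤
        wordDist T 1 (φ s) + wordDist T 1 (φ l.prod) := by
      rw [List.prod_cons, map_mul, ← wordDist_mul_left (φ s) 1 (φ l.prod), mul_one]
      exact_mod_cast wordDist_triangle hT _ _ _
    rw [List.length_cons, Nat.cast_succ]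
    linarith

theorem wordDist_map_le (hS : Subgroup.closure S = ⊤) (hT : Subgroup.closure T = ⊤) {K : ℝ}
    (hK : ∀ s ∈ S, (wordDist T 1 (φ s) : ℝ) ≤ K) (a b : G) :
    (wordDist T (φ a) (φ b) : ℝ) ≤ K * wordDist S a b := by
  obtain ⟨l, hl, hlen, hprod⟩ := exists_list_length_eq_wordDist hS a b
  rw [wordDist_map_eq, ← hprod, ← hlen]
  exact wordDist_one_map_list_prod_le φ hT hK hl

section CoarseInverse

variable {φ} {R : ℝ} (hS : Subgroup.closure S = ⊤) (hT : Subgroup.closure T = ⊤)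
  (hdense : ∀ h, ∃ g, (wordDist T h (φ g) : ℝ) ≤ R)
  (hball : ∀ g, (wordDist T 1 (φ g) : ℝ) ≤ 2 * R + 1 → g ∈ S)
include hS hT hdense hball

theorem wordDist_le_succ_of_near_of_wordDist_le (n : ℕ) :
    ∀ (a b : G) (h : H), (wordDist T (φ a) h : ℝ) ≤ R → wordDist T h (φ b) ≤ n →
      wordDist S a b ≤ n + 1 := by
  induction n with
  | zero =>
    intro a b h ha hb
    have hab : (wordDist T (φ a) (φ b) : ℝ) ≤ wordDist T (φ a) h + wordDist T h (φ b) := by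
      exact_mod_cast wordDist_triangle hT _ _ _
    have hb' : (wordDist T h (φ b) : ℝ) = 0 := by exact_mod_cast Nat.le_zero.mp hb
    refine wordDist_le_one_of_mem (hball _ ?_)
    rw [← wordDist_map_eq]
    linarith [(wordDist T (φ a) h).cast_nonneg (α := ℝ)]
  | succ n ih =>
    intro a b h ha hb
    obtain ⟨h', hstep, hrest⟩ := exists_wordDist_le_one_and_le hT hb
    obtain ⟨g, hg⟩ := hdense h'
    have hag : wordDist S a g ≤ 1 := by
      have h₁ : (wordDist T (φ a) h' : ℝ) ≤ wordDist T (φ a) h + wordDist T h h' := by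
        exact_mod_cast wordDist_triangle hT _ _ _
      have h₂ : (wordDist T (φ a) (φ g) : ℝ) ≤ wordDist T (φ a) h' + wordDist T h' (φ g) := by
        exact_mod_cast wordDist_triangle hT _ _ _
      have h₃ : (wordDist T h h' : ℝ) ≤ 1 := by exact_mod_cast hstep
      refine wordDist_le_one_of_mem (hball _ ?_)
      rw [← wordDist_map_eq]
      linarith
    have hgb := ih g b h' (by rwa [wordDist_comm]) hrest
    have := wordDist_triangle hS a g b
    omega

theorem wordDist_le_wordDist_map_add_one (hR : 0 ≤ R) (a b : G) :
    wordDist S a b ≤ wordDist T (φ a) (φ b) + 1 :=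
  wordDist_le_succ_of_near_of_wordDist_le hS hT hdense hball _ a b (φ a)
    (by simpa [wordDist_self] using hR) le_rfl

end CoarseInverse

end Homomorphism

theorem stmt3_general {G H : Type*} [Group G] [Group H]
    (S₀ : Set G) (T₀ T : Set H)
    (hS₀gen : Subgroup.closure S₀ = ⊤)
    (hT₀gen : Subgroup.closure T₀ = ⊤)
    (hT₀T : T₀ ⊆ T) (hTgen : Subgroup.closure T = ⊤)
    (q : G →* H)
    (L₀ C₀ : ℝ) (hL₀ : 1 ≤ L₀) (hC₀ : 0 ≤ C₀)
    (hq : IsQI L₀ C₀ (fun a b => (wordDist S₀ a b : ℝ)) (fun a b => (wordDist T₀ a b : ℝ)) q) :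
    ∃ S : Set G, S₀ ⊆ S ∧ Subgroup.closure S = ⊤ ∧
      ∃ L C : ℝ, 1 ≤ L ∧ 0 ≤ C ∧
        IsQI L C (fun a b => (wordDist S a b : ℝ)) (fun a b => (wordDist T a b : ℝ)) q := by
  set B := {g : G | (wordDist T 1 (q g) : ℝ) ≤ 2 * C₀ + 1}
  have hdist (x y : H) : (wordDist T x y : ℝ) ≤ wordDist T₀ x y := by
    exact_mod_cast wordDist_anti hT₀T hT₀gen x y
  have hdense (y : H) : ∃ x, (wordDist T y (q x) : ℝ) ≤ C₀ :=
    (hq.2 y).imp fun x hx => (hdist _ _).trans hx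
  have hgen : Subgroup.closure (S₀ ∪ B) = ⊤ :=
    top_unique (hS₀gen ▸ Subgroup.closure_mono Set.subset_union_left)
  have hletter : ∀ s ∈ S₀ ∪ B, (wordDist T 1 (q s) : ℝ) ≤ L₀ + 2 * C₀ := by
    rintro s (hs | hs)
    · have hqs := (hq.1 1 s).2
      have hs₁ : (wordDist S₀ 1 s : ℝ) ≤ 1 := by exact_mod_cast wordDist_le_one_of_mem (by simpa)
      rw [map_one] at hqs
      nlinarith [hdist 1 (q s)]
    · exact hs.out.trans (by linarith)
  refine ⟨S₀ ∪ B, Set.subset_union_left, hgen, L₀ + 2 * C₀, C₀ + 1, by linarith, by linarith,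
    fun a b => ⟨?_, ?_⟩, fun y => (hdense y).imp fun x hx => by linarith⟩
  · have hlower : (wordDist (S₀ ∪ B) a b : ℝ) ≤ wordDist T (q a) (q b) + 1 := by
      exact_mod_cast wordDist_le_wordDist_map_add_one hgen hTgen hdense (fun _ => Or.inr) hC₀ a b
    have hdiv := div_le_self (wordDist (S₀ ∪ B) a b).cast_nonneg (by linarith : 1 ≤ L₀ + 2 * C₀)
    linarith
  · linarith [wordDist_map_le q hgen hTgen hletter a b]

theorem stmt3 {G H : Type*} [Group G] [Group H]
    (S₀ : Set G) (T₀ T : Set H)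
    (hS₀fin : S₀.Finite) (hS₀gen : Subgroup.closure S₀ = ⊤)
    (hT₀fin : T₀.Finite) (hT₀gen : Subgroup.closure T₀ = ⊤)
    (hT₀T : T₀ ⊆ T) (hTgen : Subgroup.closure T = ⊤)
    (q : G →* H)
    (L₀ C₀ : ℝ) (hL₀ : 1 ≤ L₀) (hC₀ : 0 ≤ C₀)
    (hq : IsQI L₀ C₀ (fun a b => (wordDist S₀ a b : ℝ)) (fun a b => (wordDist T₀ a b : ℝ)) q) :
    ∃ S : Set G, S₀ ⊆ S ∧ Subgroup.closure S = ⊤ ∧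
      ∃ L C : ℝ, 1 ≤ L ∧ 0 ≤ C ∧
        IsQI L C (fun a b => (wordDist S a b : ℝ)) (fun a b => (wordDist T a b : ℝ)) q :=
  stmt3_general S₀ T₀ T hS₀gen hT₀gen hT₀T hTgen q L₀ C₀ hL₀ hC₀ hq
end

section
/- Let A be a group, let F be a finite subgroup of Aut(A), and let 𝓗 be a collection of infinite subgroups of A such that: (i) f(H) ∈ 𝓗 for every f ∈ F and H ∈ 𝓗; (ii) 𝓗 is an almost malnormal collection, i.e. for all H, K ∈ 𝓗 and a ∈ A, if H ∩ aKa⁻¹ is infinite then H = K and a ∈ H; (iii) the F-action on 𝓗 is free, i.e. if f(H) = H for some H ∈ 𝓗 then f = id. Then for every H ∈ 𝓗, identifying A with its image in the semidirect product A⋊F, the commensurator of H in A⋊F equals H: Comm_{A⋊F}(H) = H. -/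
/-!
Conjugating `ι(H)` by `g = (a, f) ∈ A ⋊ F` gives `ι(a f(H) a⁻¹)`. If `g` commensurates `ι(H)`,
then `H ∩ a f(H) a⁻¹` has finite index in the infinite group `H`, so it is infinite. Almost
malnormality then forces `f(H) = H` and `a ∈ H`, and freeness of the action gives `f = 1`,
i.e. `g = ι(a) ∈ ι(H)`.
-/

open Subgroup Pointwise

theorem Subgroup.infinite_inf_of_relIndex_ne_zero {G : Type*} [Group G] {H K : Subgroup G}
    (h : H.relIndex K ≠ 0) (hK : (K : Set G).Infinite) :
    ((H ⊓ K : Subgroup G) : Set G).Infinite := by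
  intro hfin
  have : Finite (H ⊓ K : Subgroup G) := hfin.to_subtype
  have : Infinite K := hK.to_subtype
  have hcard := relIndex_mul_relIndex ⊥ (H ⊓ K) K bot_le inf_le_right
  rw [relIndex_bot_left, relIndex_bot_left, inf_relIndex_right,
    Nat.card_eq_zero_of_infinite (α := K)] at hcard
  exact mul_ne_zero Nat.card_pos.ne' h hcard

theorem Subgroup.Commensurable.le_commensurator {G : Type*} [Group G] (H : Subgroup G) :
    H ≤ Commensurable.commensurator H := fun _ hg => by
  rw [Commensurable.commensurator_mem_iff, conjAct_pointwise_smul_eq_self (le_normalizer hg)]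

namespace SemidirectProduct

variable {N G : Type*} [Group N] [Group G] {φ : G →* MulAut N}

theorem mul_inl_mul_inv (g : N ⋊[φ] G) (n : N) :
    g * inl n * g⁻¹ = inl (g.left * φ g.right n * g.left⁻¹) := by
  ext <;> simp [mul_assoc]

theorem conjAct_smul_map_inl (g : N ⋊[φ] G) (H : Subgroup N) :
    ConjAct.toConjAct g • H.map (inl : N →* N ⋊[φ] G)
      = ((H.map (φ g.right).toMonoidHom).map (MulAut.conj g.left).toMonoidHom).map inl := by
  ext x
  simp only [mem_smul_pointwise_iff_exists, mem_map, exists_exists_and_eq_and,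
    ConjAct.toConjAct_smul, mul_inl_mul_inv, MulEquiv.coe_toMonoidHom, MulAut.conj_apply]

theorem infinite_inf_conj_of_mem_commensurator {H : Subgroup N} (hH : (H : Set N).Infinite)
    {g : N ⋊[φ] G} (hg : g ∈ Commensurable.commensurator (H.map (inl : N →* N ⋊[φ] G))) :
    ((H ⊓ (H.map (φ g.right).toMonoidHom).map (MulAut.conj g.left).toMonoidHom : Subgroup N)
      : Set N).Infinite := by
  have hHinl : (H.map (inl : N →* N ⋊[φ] G) : Set (N ⋊[φ] G)).Infinite := by
    rw [coe_map]
    exact hH.image inl_injective.injOn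
  have hinf := infinite_inf_of_relIndex_ne_zero
    ((Commensurable.commensurator_mem_iff _ _).1 hg).1 hHinl
  rw [conjAct_smul_map_inl, ← map_inf _ _ _ inl_injective, coe_map, inf_comm] at hinf
  exact hinf.of_image _

end SemidirectProduct

theorem stmt16_general {A : Type*} [Group A]
    (F : Subgroup (MulAut A))
    (𝓗 : Set (Subgroup A))
    (hInf : ∀ H ∈ 𝓗, ((H : Set A)).Infinite)
    (hInv : ∀ f ∈ F, ∀ H ∈ 𝓗, Subgroup.map (MulEquiv.toMonoidHom f) H ∈ 𝓗)
    (hMal : ∀ H ∈ 𝓗, ∀ K ∈ 𝓗, ∀ a : A,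
      ((H ⊓ Subgroup.map (MulAut.conj a).toMonoidHom K : Subgroup A) : Set A).Infinite →
        H = K ∧ a ∈ H)
    (hFree : ∀ f ∈ F, ∀ H ∈ 𝓗, Subgroup.map (MulEquiv.toMonoidHom f) H = H → f = 1) :
    ∀ H ∈ 𝓗,
      Subgroup.Commensurable.commensurator
          (Subgroup.map (SemidirectProduct.inl : A →* A ⋊[F.subtype] F) H)
        = Subgroup.map (SemidirectProduct.inl : A →* A ⋊[F.subtype] F) H := by
  intro H hH
  refine le_antisymm (fun g hg => ?_) (Commensurable.le_commensurator _)
  obtain ⟨hHK, hleft⟩ := hMal H hH _ (hInv _ g.right.2 H hH) g.left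
    (SemidirectProduct.infinite_inf_conj_of_mem_commensurator (hInf H hH) hg)
  have hright : g.right = 1 := Subtype.ext (hFree _ g.right.2 H hH hHK.symm)
  rw [← SemidirectProduct.inl_left_mul_inr_right g, hright, map_one, mul_one]
  exact mem_map_of_mem _ hleft

theorem stmt16 {A : Type*} [Group A]
    (F : Subgroup (MulAut A)) (hFfin : (F : Set (MulAut A)).Finite)
    (𝓗 : Set (Subgroup A))
    (hInf : ∀ H ∈ 𝓗, ((H : Set A)).Infinite)
    (hInv : ∀ f ∈ F, ∀ H ∈ 𝓗, Subgroup.map (MulEquiv.toMonoidHom f) H ∈ 𝓗)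
    (hMal : ∀ H ∈ 𝓗, ∀ K ∈ 𝓗, ∀ a : A,
      ((H ⊓ Subgroup.map (MulAut.conj a).toMonoidHom K : Subgroup A) : Set A).Infinite →
        H = K ∧ a ∈ H)
    (hFree : ∀ f ∈ F, ∀ H ∈ 𝓗, Subgroup.map (MulEquiv.toMonoidHom f) H = H → f = 1) :
    ∀ H ∈ 𝓗,
      Subgroup.Commensurable.commensurator
          (Subgroup.map (SemidirectProduct.inl : A →* A ⋊[F.subtype] F) H)
        = Subgroup.map (SemidirectProduct.inl : A →* A ⋊[F.subtype] F) H :=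
  stmt16_general F 𝓗 hInf hInv hMal hFree
end
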